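/- Let π be an integral path (for the affine sl_2 root datum) with ε_0(π) = N > 0, and suppose that π attains min α_0∘π = −N at a time belonging to an α_1-stable section of π at N. Then min α_1∘(e_0^N(π)) ≤ −N; consequently e_1^N e_0^N(π) is defined and π = f_0^N f_1^N(e_1^N e_0^N(π)), i.e. π lies in the image of f_0^N f_1^N. The same holds with the indices 0 and 1 exchanged. -/
import Mathlib


open Set

namespace MVPaper

variable {V : Type*} [AddCommGroup V] [Module ℝ V]

/-- `π` is piecewise linear (affine) on `[0,1]`. -/
def IsPWLinearOn (π : ℝ → V) : Prop :=
  ∃ (n : ℕ) (t : Fin (n + 1) → ℝ), Monotone t ∧ t 0 = 0 ∧ t (Fin.last n) = 1 ∧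
    ∀ i : Fin n, ∃ a b : V, ∀ s ∈ Set.Icc (t i.castSucc) (t i.succ), π s = s • a + b

/-- A path: continuous piecewise linear with `π 0 = 0`. -/
def IsPath (π : ℝ → V) : Prop := π 0 = 0 ∧ IsPWLinearOn π

/-- `t ∈ (0,1)` is a local minimum point of `f`. -/
def IsLocalMinPt (f : ℝ → ℝ) (t : ℝ) : Prop :=
  t ∈ Set.Ioo (0 : ℝ) 1 ∧ ∀ᶠ s in nhds t, f t ≤ f s

/-- `f` takes integer values at `0`, `1` and at local minimum points. -/
def IsIntegralFn (f : ℝ → ℝ) : Prop :=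
  (∃ m : ℤ, f 0 = m) ∧ (∃ m : ℤ, f 1 = m) ∧ ∀ t, IsLocalMinPt f t → ∃ m : ℤ, f t = m

def IsZeroSectionAt (f : ℝ → ℝ) (m a b : ℝ) : Prop :=
  0 ≤ a ∧ a < b ∧ b ≤ 1 ∧ ∀ t ∈ Set.Icc a b, f t = m

def IsPreStableAt (f : ℝ → ℝ) (m a b : ℝ) : Prop :=
  0 ≤ a ∧ a < b ∧ b ≤ 1 ∧ f a = m ∧ f b = m ∧ ∀ t ∈ Set.Ioo a b, m < f t

/-- A stable section: maximal among intervals on which `f` equals `m` at the ends and is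
`> m` inside, for some integer level. -/
def IsStableSectionAt (f : ℝ → ℝ) (m a b : ℝ) : Prop :=
  IsPreStableAt f m a b ∧
    ∀ (m' : ℤ) (a' b' : ℝ), IsPreStableAt f (m' : ℝ) a' b' → a' ≤ a → b ≤ b' →
      a' = a ∧ b' = b

def IsPosDirectedSectionAt (f : ℝ → ℝ) (m a b : ℝ) : Prop :=
  0 ≤ a ∧ a < b ∧ b ≤ 1 ∧ f a = m ∧ f b = m + 1 ∧
    ∀ t ∈ Set.Ioo a b, m < f t ∧ f t < m + 1

def IsNegDirectedSectionAt (f : ℝ → ℝ) (m a b : ℝ) : Prop :=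
  0 ≤ a ∧ a < b ∧ b ≤ 1 ∧ f a = m ∧ f b = m - 1 ∧
    ∀ t ∈ Set.Ioo a b, m - 1 < f t ∧ f t < m

def IsSectionAt (f : ℝ → ℝ) (a b : ℝ) : Prop :=
  ∃ m : ℤ, IsZeroSectionAt f (m : ℝ) a b ∨ IsStableSectionAt f (m : ℝ) a b ∨
    IsPosDirectedSectionAt f (m : ℝ) a b ∨ IsNegDirectedSectionAt f (m : ℝ) a b

/-- `a` and `b` are consecutive elements of the finite set `T`. -/
def Adjacent (T : Finset ℝ) (a b : ℝ) : Prop :=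
  a ∈ T ∧ b ∈ T ∧ a < b ∧ ∀ c ∈ T, c ≤ a ∨ b ≤ c

/-- `T` is a subdivision of `[0,1]` each of whose consecutive intervals is a section of `f`. -/
def IsSectionDecomposition (f : ℝ → ℝ) (T : Finset ℝ) : Prop :=
  (0 : ℝ) ∈ T ∧ (1 : ℝ) ∈ T ∧ (T : Set ℝ) ⊆ Set.Icc 0 1 ∧
    ∀ a b : ℝ, Adjacent T a b → IsSectionAt f a b

def NoTwoConsecutiveZeroSections (f : ℝ → ℝ) (T : Finset ℝ) : Prop :=
  ∀ a b c : ℝ, Adjacent T a b → Adjacent T b c →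
    ¬ ((∃ m : ℤ, IsZeroSectionAt f (m : ℝ) a b) ∧ (∃ m : ℤ, IsZeroSectionAt f (m : ℝ) b c))

/-- `Q_β(π) = min β∘π` on `[0,1]`. -/
noncomputable def Qval (β : V →ₗ[ℝ] ℝ) (π : ℝ → V) : ℝ :=
  sInf ((fun t => β (π t)) '' Set.Icc (0 : ℝ) 1)

/-- The reflection `s_β(v) = v - β(v)β^∨`. -/
def sRefl (β : V →ₗ[ℝ] ℝ) (βv : V) (v : V) : V := v - β v • βv

/-- `q`, the first time the minimum of `β∘π` is attained. -/
noncomputable def qTime (β : V →ₗ[ℝ] ℝ) (π : ℝ → V) : ℝ :=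
  sInf {t | t ∈ Set.Icc (0 : ℝ) 1 ∧ β (π t) = Qval β π}

/-- `y`, the last time before `q` where `β∘π = Q+1`. -/
noncomputable def yTime (β : V →ₗ[ℝ] ℝ) (π : ℝ → V) : ℝ :=
  sSup {t | t ∈ Set.Icc (0 : ℝ) 1 ∧ t < qTime β π ∧ β (π t) = Qval β π + 1}

/-- Littelmann raising operator. -/
noncomputable def eOp (β : V →ₗ[ℝ] ℝ) (βv : V) (π : ℝ → V) : ℝ → V := fun t =>
  if t ≤ yTime β π then π t
  else if t ≤ qTime β π then π (yTime β π) + sRefl β βv (π t - π (yTime β π))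
  else π t + βv

/-- `p`, the last time the minimum of `β∘π` is attained. -/
noncomputable def pTime (β : V →ₗ[ℝ] ℝ) (π : ℝ → V) : ℝ :=
  sSup {t | t ∈ Set.Icc (0 : ℝ) 1 ∧ β (π t) = Qval β π}

/-- `x`, the first time after `p` where `β∘π = Q+1`. -/
noncomputable def xTime (β : V →ₗ[ℝ] ℝ) (π : ℝ → V) : ℝ :=
  sInf {t | t ∈ Set.Icc (0 : ℝ) 1 ∧ pTime β π < t ∧ β (π t) = Qval β π + 1}

/-- Littelmann lowering operator. -/
noncomputable def fOp (β : V →ₗ[ℝ] ℝ) (βv : V) (π : ℝ → V) : ℝ → V := fun t =>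
  if t ≤ pTime β π then π t
  else if t ≤ xTime β π then π (pTime β π) + sRefl β βv (π t - π (pTime β π))
  else π t - βv

noncomputable def phiVal (β : V →ₗ[ℝ] ℝ) (π : ℝ → V) : ℝ := β (π 1) - Qval β π

/-- `e_β^{max}`: iterate `e_β` while `Q_β ≤ -1`, i.e. `ε_β(π)` many times. -/
noncomputable def eMax (β : V →ₗ[ℝ] ℝ) (βv : V) (π : ℝ → V) : ℝ → V :=
  (eOp β βv)^[⌊-(Qval β π)⌋₊] π

/-- `f_β^{max}`: iterate `f_β` while `φ_β ≥ 1`, i.e. `φ_β(π)` many times. -/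
noncomputable def fMax (β : V →ₗ[ℝ] ℝ) (βv : V) (π : ℝ → V) : ℝ → V :=
  (fOp β βv)^[⌊phiVal β π⌋₊] π


/-- The affine `sl₂` root datum. -/
def IsAffineSL2 (a0 a1 : V →ₗ[ℝ] ℝ) (v0 v1 : V) : Prop :=
  a0 v0 = 2 ∧ a1 v1 = 2 ∧ a0 v1 = -2 ∧ a1 v0 = -2

/-- `π` is integral: `β∘π` is integral for every positive real root `β = α_i + kδ`. -/
def IsIntegralPathSL2 (a0 a1 : V →ₗ[ℝ] ℝ) (π : ℝ → V) : Prop :=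
  ∀ k : ℕ, IsIntegralFn (fun t => (a0 + (k : ℝ) • (a0 + a1)) (π t)) ∧
    IsIntegralFn (fun t => (a1 + (k : ℝ) • (a0 + a1)) (π t))

/-- `[s,v]` is an `α_i`-zigzag of `π` at `k`: it contains an `α_i`-stable section `[s,u]`
at `k` and an `α_{i+1}`-stable section `[t,v]` at `-k` with `s ≤ t ≤ u ≤ v`, and on
`[s,v]` one has `α_i ≥ k` and `α_{i+1} ≥ -k`. -/
def IsZigzagInterval (βi βi1 : V →ₗ[ℝ] ℝ) (π : ℝ → V) (k : ℤ) (s v : ℝ) : Prop :=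
  ∃ t u : ℝ, s ≤ t ∧ t ≤ u ∧ u ≤ v ∧
    IsStableSectionAt (fun r => βi (π r)) (k : ℝ) s u ∧
    IsStableSectionAt (fun r => βi1 (π r)) (-k : ℝ) t v ∧
    (∀ r ∈ Set.Icc s v, (k : ℝ) ≤ βi (π r)) ∧
    (∀ r ∈ Set.Icc s v, (-k : ℝ) ≤ βi1 (π r))

/-- `π` has an `α_i`-zigzag at `k` (with `βi = α_i`, `βi1 = α_{i+1}`). -/
def HasZigzagAt (βi βi1 : V →ₗ[ℝ] ℝ) (π : ℝ → V) (k : ℤ) : Prop :=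
  ∃ s v : ℝ, IsZigzagInterval βi βi1 π k s v

/-- The number `m_{i,k}(π)` of `α_i`-zigzags of `π` at `k`. -/
noncomputable def zigzagCount (βi βi1 : V →ₗ[ℝ] ℝ) (π : ℝ → V) (k : ℤ) : ℕ :=
  Nat.card {p : ℝ × ℝ // IsZigzagInterval βi βi1 π k p.1 p.2}
/-! ### Auxiliary machinery for Statement 11 -/

open Filter in
lemma lm_of_le {F G : ℝ → ℝ} {t : ℝ} (h : IsLocalMinPt G t)
    (hev : ∀ᶠ s in nhds t, G s - G t ≤ F s - F t) : IsLocalMinPt F t := by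
  refine ⟨h.1, ?_⟩
  filter_upwards [h.2, hev] with s h1 h2
  linarith

open Filter in
lemma lm_congr {F G : ℝ → ℝ} {t : ℝ} (h : IsLocalMinPt G t)
    (hev : ∀ᶠ s in nhds t, F s = G s) : IsLocalMinPt F t := by
  have ht : F t = G t := hev.self_of_nhds
  refine ⟨h.1, ?_⟩
  filter_upwards [h.2, hev] with s h1 h2
  rw [ht, h2]; exact h1

lemma continuousOn_glue {f : ℝ → ℝ} {a b c : ℝ} (hab : a ≤ b) (hbc : b ≤ c)
    (h1 : ContinuousOn f (Icc a b)) (h2 : ContinuousOn f (Icc b c)) :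
    ContinuousOn f (Icc a c) := by
  rw [← Icc_union_Icc_eq_Icc hab hbc]
  intro x hx
  have c1 : ContinuousWithinAt f (Icc a b) x := by
    by_cases hxb : x ∈ Icc a b
    · exact h1 x hxb
    · exact continuousWithinAt_of_notMem_closure (by rwa [isClosed_Icc.closure_eq])
  have c2 : ContinuousWithinAt f (Icc b c) x := by
    by_cases hxb : x ∈ Icc b c
    · exact h2 x hxb
    · exact continuousWithinAt_of_notMem_closure (by rwa [isClosed_Icc.closure_eq])
  exact c1.union c2

lemma contOn_of_pwlinear (γ : V →ₗ[ℝ] ℝ) {π : ℝ → V} (h : IsPWLinearOn π) :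
    ContinuousOn (fun s => γ (π s)) (Icc (0:ℝ) 1) := by
  obtain ⟨n, t, hmono, ht0, htl, hp⟩ := h
  have key : ∀ i : Fin (n+1), ContinuousOn (fun s => γ (π s)) (Icc (t 0) (t i)) := by
    intro i
    induction i using Fin.induction with
    | zero =>
        rw [Set.Icc_self]
        exact continuousOn_singleton _ _
    | succ i ih =>
        have hpiece : ContinuousOn (fun s => γ (π s)) (Icc (t i.castSucc) (t i.succ)) := by
          obtain ⟨a, b, hab⟩ := hp i
          refine ContinuousOn.congr (f := fun s : ℝ => s * γ a + γ b) ?_ ?_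
          · exact ((continuous_id.mul continuous_const).add continuous_const).continuousOn
          · intro s hs
            show γ (π s) = s * γ a + γ b
            rw [hab s hs]
            simp [smul_eq_mul]
        exact continuousOn_glue (hmono (Fin.zero_le _)) (hmono i.castSucc_le_succ) ih hpiece
  have := key (Fin.last n)
  rwa [ht0, htl] at this

lemma exists_minOn {f : ℝ → ℝ} (hf : ContinuousOn f (Icc 0 1)) :
    ∃ t0 ∈ Icc (0:ℝ) 1, (∀ s ∈ Icc (0:ℝ) 1, f t0 ≤ f s) ∧ sInf (f '' Icc (0:ℝ) 1) = f t0 := by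
  obtain ⟨t0, ht0, hmin⟩ := isCompact_Icc.exists_isMinOn (nonempty_Icc.mpr zero_le_one) hf
  have hm : ∀ s ∈ Icc (0:ℝ) 1, f t0 ≤ f s := fun s hs => isMinOn_iff.mp hmin s hs
  refine ⟨t0, ht0, hm, ?_⟩
  apply IsLeast.csInf_eq
  exact ⟨⟨t0, ht0, rfl⟩, by rintro r ⟨s, hs, rfl⟩; exact hm s hs⟩

/-- The hypotheses needed to apply `eOp` once (and iterate). -/
structure Nice (β : V →ₗ[ℝ] ℝ) (σ : ℝ → V) (Q : ℤ) : Prop where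
  cont : ∀ γ : V →ₗ[ℝ] ℝ, ContinuousOn (fun s => γ (σ s)) (Icc (0:ℝ) 1)
  zero : σ 0 = 0
  qval : Qval β σ = (Q : ℝ)
  intmin : ∀ t, IsLocalMinPt (fun s => β (σ s)) t → t < qTime β σ →
    ∃ m : ℤ, β (σ t) = (m : ℝ)

section NiceFacts

variable {β : V →ₗ[ℝ] ℝ} {σ : ℝ → V} {Q : ℤ}

lemma Nice.ge (h : Nice β σ Q) : ∀ s ∈ Icc (0:ℝ) 1, (Q : ℝ) ≤ β (σ s) := by
  obtain ⟨t0, ht0, hm, hinf⟩ := exists_minOn (h.cont β)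
  have hq : (Q : ℝ) = β (σ t0) := by rw [← h.qval]; exact hinf
  intro s hs
  rw [hq]; exact hm s hs

lemma Nice.qfacts (h : Nice β σ Q) :
    qTime β σ ∈ Icc (0:ℝ) 1 ∧ β (σ (qTime β σ)) = (Q : ℝ) ∧
      (∀ t ∈ Icc (0:ℝ) 1, β (σ t) = (Q : ℝ) → qTime β σ ≤ t) := by
  have hset : {t | t ∈ Icc (0:ℝ) 1 ∧ β (σ t) = Qval β σ}
      = Icc (0:ℝ) 1 ∩ (fun s => β (σ s)) ⁻¹' {(Q : ℝ)} := by
    ext s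
    simp only [Set.mem_setOf_eq, Set.mem_inter_iff, Set.mem_preimage,
      Set.mem_singleton_iff, h.qval]
  have hclosed : IsClosed {t | t ∈ Icc (0:ℝ) 1 ∧ β (σ t) = Qval β σ} := by
    rw [hset]
    exact (h.cont β).preimage_isClosed_of_isClosed isClosed_Icc isClosed_singleton
  have hne : {t | t ∈ Icc (0:ℝ) 1 ∧ β (σ t) = Qval β σ}.Nonempty := by
    obtain ⟨t0, ht0, hm, hinf⟩ := exists_minOn (h.cont β)
    exact ⟨t0, ht0, hinf.symm⟩
  have hbdd : BddBelow {t | t ∈ Icc (0:ℝ) 1 ∧ β (σ t) = Qval β σ} := ⟨0, fun x hx => hx.1.1⟩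
  have hmem : qTime β σ ∈ {t | t ∈ Icc (0:ℝ) 1 ∧ β (σ t) = Qval β σ} :=
    hclosed.csInf_mem hne hbdd
  refine ⟨hmem.1, by rw [← h.qval]; exact hmem.2, fun t ht hq => csInf_le hbdd ⟨ht, ?_⟩⟩
  rw [h.qval]; exact hq

lemma Nice.qpos (h : Nice β σ Q) (hQ : Q ≤ -1) : 0 < qTime β σ := by
  obtain ⟨hIcc, hval, _⟩ := h.qfacts
  rcases lt_or_eq_of_le hIcc.1 with h0 | h0
  · exact h0
  · exfalso
    rw [← h0, h.zero, map_zero] at hval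
    have : (Q : ℤ) = 0 := by exact_mod_cast hval.symm
    omega

lemma Nice.gt_on (h : Nice β σ Q) : ∀ s, 0 ≤ s → s < qTime β σ → (Q : ℝ) < β (σ s) := by
  intro s h0 hs
  obtain ⟨hqIcc, _, hqmin⟩ := h.qfacts
  have hs1 : s ∈ Icc (0:ℝ) 1 := ⟨h0, hs.le.trans hqIcc.2⟩
  rcases eq_or_lt_of_le (h.ge s hs1) with heq | hlt
  · exact absurd (hqmin s hs1 heq.symm) (not_le.mpr hs)
  · exact hlt

lemma Nice.yfacts (h : Nice β σ Q) (hQ : Q ≤ -1) :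
    0 ≤ yTime β σ ∧ yTime β σ < qTime β σ ∧ β (σ (yTime β σ)) = (Q : ℝ) + 1 ∧
      (∀ s ∈ Ioc (yTime β σ) (qTime β σ), β (σ s) < (Q : ℝ) + 1) ∧
      (∀ s ∈ Icc (0:ℝ) (yTime β σ), (Q : ℝ) + 1 ≤ β (σ s)) := by
  obtain ⟨hqIcc, val_q, hqmin⟩ := h.qfacts
  have hqpos := h.qpos hQ
  have hQR : (Q : ℝ) ≤ -1 := by exact_mod_cast hQ
  set S : Set ℝ := {t | t ∈ Icc (0:ℝ) 1 ∧ t < qTime β σ ∧ β (σ t) = Qval β σ + 1} with hS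
  have hyS : yTime β σ = sSup S := rfl
  have hSne : S.Nonempty := by
    have hcont' : ContinuousOn (fun s => β (σ s)) (Icc 0 (qTime β σ)) :=
      (h.cont β).mono (Icc_subset_Icc le_rfl hqIcc.2)
    have hmem : (Q : ℝ) + 1 ∈ Icc (β (σ (qTime β σ))) (β (σ 0)) := by
      rw [val_q, h.zero, map_zero]
      constructor <;> linarith
    obtain ⟨s, hs, hfs⟩ := intermediate_value_Icc' hqpos.le hcont' hmem
    have hfs : β (σ s) = (Q : ℝ) + 1 := hfs
    have hsq : s ≠ qTime β σ := by
      intro hsq; rw [hsq, val_q] at hfs; linarith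
    refine ⟨s, ⟨hs.1, hs.2.trans hqIcc.2⟩, lt_of_le_of_ne hs.2 hsq, ?_⟩
    rw [h.qval]; exact hfs
  have hbdd : BddAbove S := ⟨qTime β σ, fun x hx => hx.2.1.le⟩
  have hclosedC : IsClosed ((Icc (0:ℝ) 1 ∩ (fun s => β (σ s)) ⁻¹' {(Q : ℝ) + 1}) ∩
      Iic (qTime β σ)) :=
    ((h.cont β).preimage_isClosed_of_isClosed isClosed_Icc isClosed_singleton).inter isClosed_Iic
  have hsubC : S ⊆ (Icc (0:ℝ) 1 ∩ (fun s => β (σ s)) ⁻¹' {(Q : ℝ) + 1}) ∩ Iic (qTime β σ) := by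
    intro x hx
    refine ⟨⟨hx.1, ?_⟩, hx.2.1.le⟩
    simp only [Set.mem_preimage, Set.mem_singleton_iff]
    rw [← h.qval]; exact hx.2.2
  have hyC : yTime β σ ∈ (Icc (0:ℝ) 1 ∩ (fun s => β (σ s)) ⁻¹' {(Q : ℝ) + 1}) ∩
      Iic (qTime β σ) := by
    rw [hyS]
    exact closure_minimal hsubC hclosedC (csSup_mem_closure hSne hbdd)
  have val_y : β (σ (yTime β σ)) = (Q : ℝ) + 1 := hyC.1.2
  have hy0 : 0 ≤ yTime β σ := hyC.1.1.1
  have hyq : yTime β σ < qTime β σ := by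
    have hyq' : yTime β σ ≤ qTime β σ := hyC.2
    rcases lt_or_eq_of_le hyq' with hlt | heq
    · exact hlt
    · exfalso; rw [heq, val_q] at val_y; linarith
  have hub : ∀ x ∈ S, x ≤ yTime β σ := fun x hx => le_csSup hbdd hx
  have hmid : ∀ s ∈ Ioc (yTime β σ) (qTime β σ), β (σ s) < (Q : ℝ) + 1 := by
    rintro s ⟨hs1, hs2⟩
    rcases eq_or_lt_of_le hs2 with heq | hlt
    · rw [heq, val_q]; linarith
    · by_contra hge
      push_neg at hge
      have hcont' : ContinuousOn (fun u => β (σ u)) (Icc s (qTime β σ)) :=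
        (h.cont β).mono (Icc_subset_Icc (hy0.trans hs1.le) hqIcc.2)
      have hmem : (Q : ℝ) + 1 ∈ Icc (β (σ (qTime β σ))) (β (σ s)) := by
        rw [val_q]; exact ⟨by linarith, hge⟩
      obtain ⟨s1, hs1', hfs1⟩ := intermediate_value_Icc' hlt.le hcont' hmem
      have hfs1 : β (σ s1) = (Q : ℝ) + 1 := hfs1
      have hs1q : s1 ≠ qTime β σ := by
        intro hh; rw [hh, val_q] at hfs1; linarith
      have : s1 ∈ S := by
        refine ⟨⟨(hy0.trans hs1.le).trans hs1'.1, hs1'.2.trans hqIcc.2⟩,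
          lt_of_le_of_ne hs1'.2 hs1q, ?_⟩
        rw [h.qval]; exact hfs1
      have := hub s1 this
      have : yTime β σ < s1 := lt_of_lt_of_le hs1 hs1'.1
      linarith [hub s1 ‹s1 ∈ S›]
  have hleft : ∀ s ∈ Icc (0:ℝ) (yTime β σ), (Q : ℝ) + 1 ≤ β (σ s) := by
    have hy1 : yTime β σ ≤ (1:ℝ) := hyq.le.trans hqIcc.2
    obtain ⟨t0, ht0, hmin⟩ := isCompact_Icc.exists_isMinOn (nonempty_Icc.mpr hy0)
      ((h.cont β).mono (Icc_subset_Icc le_rfl hy1))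
    have hm : ∀ s ∈ Icc (0:ℝ) (yTime β σ), β (σ t0) ≤ β (σ s) :=
      fun s hs => isMinOn_iff.mp hmin s hs
    have key : (Q : ℝ) + 1 ≤ β (σ t0) := by
      rcases eq_or_lt_of_le ht0.1 with he0 | h0
      · rw [← he0, h.zero, map_zero]; linarith
      · rcases eq_or_lt_of_le ht0.2 with hey | hy
        · rw [hey, val_y]
        · have hlm : IsLocalMinPt (fun s => β (σ s)) t0 := by
            refine ⟨⟨h0, lt_of_lt_of_le (hy.trans hyq) hqIcc.2⟩, ?_⟩
            filter_upwards [Ioo_mem_nhds h0 hy] with s hs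
            exact hm s ⟨hs.1.le, hs.2.le⟩
          obtain ⟨m, hmv⟩ := h.intmin t0 hlm (hy.trans hyq)
          have hgt : (Q : ℝ) < β (σ t0) := h.gt_on t0 ht0.1 (hy.trans hyq)
          rw [hmv] at hgt ⊢
          have hqm : Q < m := by exact_mod_cast hgt
          have h1 : Q + 1 ≤ m := by omega
          exact_mod_cast h1
    intro s hs
    exact le_trans key (hm s hs)
  exact ⟨hy0, hyq, val_y, hmid, hleft⟩

end NiceFacts

lemma sRefl_sRefl {β : V →ₗ[ℝ] ℝ} {βv : V} (hβ : β βv = 2) (x : V) :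
    sRefl β βv (sRefl β βv x) = x := by
  simp only [sRefl, map_sub, map_smul, smul_eq_mul, hβ]
  have h1 : β x - β x * 2 = -β x := by ring
  rw [h1, neg_smul]
  abel

/-- All the facts produced by one application of the raising operator. -/
structure StepFacts (β : V →ₗ[ℝ] ℝ) (βv : V) (σ : ℝ → V) (Q : ℤ) : Prop where
  nice' : Nice β (eOp β βv σ) (Q + 1)
  y_nonneg : 0 ≤ yTime β σ
  y_lt_q : yTime β σ < qTime β σ
  q_pos : 0 < qTime β σ
  q_le_one : qTime β σ ≤ 1
  val_q : β (σ (qTime β σ)) = (Q : ℝ)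
  val_y : β (σ (yTime β σ)) = (Q : ℝ) + 1
  lower_left : ∀ s ∈ Icc (0:ℝ) (yTime β σ), (Q : ℝ) + 1 ≤ β (σ s)
  upper_mid : ∀ s ∈ Ioc (yTime β σ) (qTime β σ), β (σ s) < (Q : ℝ) + 1
  ge_all : ∀ s ∈ Icc (0:ℝ) 1, (Q : ℝ) ≤ β (σ s)
  e_left : ∀ t, t ≤ yTime β σ → eOp β βv σ t = σ t
  v_mid : ∀ (γ : V →ₗ[ℝ] ℝ) t, yTime β σ < t → t ≤ qTime β σ →
    γ (eOp β βv σ t) = γ (σ t) - (β (σ t) - ((Q : ℝ) + 1)) * γ βv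
  v_right : ∀ (γ : V →ₗ[ℝ] ℝ) t, qTime β σ ≤ t → γ (eOp β βv σ t) = γ (σ t) + γ βv
  e_right : ∀ t, qTime β σ ≤ t → eOp β βv σ t = σ t + βv
  q'_le_y : qTime β (eOp β βv σ) ≤ yTime β σ
  finv : fOp β βv (eOp β βv σ) = σ

lemma step {β : V →ₗ[ℝ] ℝ} {βv : V} {σ : ℝ → V} {Q : ℤ}
    (hβ : β βv = 2) (h : Nice β σ Q) (hQ : Q ≤ -1) : StepFacts β βv σ Q := by
  obtain ⟨hqIcc, val_q, hqmin⟩ := h.qfacts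
  have hqpos := h.qpos hQ
  obtain ⟨hy0, hyq, val_y, hmid, hleft⟩ := h.yfacts hQ
  have hy1 : yTime β σ ≤ 1 := hyq.le.trans hqIcc.2
  have hge := h.ge
  -- formulas for eOp
  have e_left : ∀ t, t ≤ yTime β σ → eOp β βv σ t = σ t := by
    intro t ht
    simp only [eOp]
    rw [if_pos ht]
  have e_mid : ∀ t, yTime β σ < t → t ≤ qTime β σ →
      eOp β βv σ t = σ (yTime β σ) + sRefl β βv (σ t - σ (yTime β σ)) := by
    intro t h1 h2
    simp only [eOp]
    rw [if_neg (not_le.mpr h1), if_pos h2]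
  have e_gt : ∀ t, qTime β σ < t → eOp β βv σ t = σ t + βv := by
    intro t h1
    simp only [eOp]
    rw [if_neg (not_le.mpr (hyq.trans h1)), if_neg (not_le.mpr h1)]
  have e_right : ∀ t, qTime β σ ≤ t → eOp β βv σ t = σ t + βv := by
    intro t h1
    rcases eq_or_lt_of_le h1 with heq | h1
    · have hmt := e_mid t (heq ▸ hyq) heq.ge
      rw [hmt]
      have hb : β (σ t - σ (yTime β σ)) = -1 := by
        rw [map_sub, ← heq, val_q, val_y]; ring
      rw [sRefl, hb, neg_one_smul]
      abel
    · exact e_gt t h1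
  have v_mid : ∀ (γ : V →ₗ[ℝ] ℝ) t, yTime β σ < t → t ≤ qTime β σ →
      γ (eOp β βv σ t) = γ (σ t) - (β (σ t) - ((Q : ℝ) + 1)) * γ βv := by
    intro γ t h1 h2
    rw [e_mid t h1 h2]
    simp only [sRefl, map_add, map_sub, map_smul, smul_eq_mul, val_y]
    ring
  have v_right : ∀ (γ : V →ₗ[ℝ] ℝ) t, qTime β σ ≤ t →
      γ (eOp β βv σ t) = γ (σ t) + γ βv := by
    intro γ t ht
    rw [e_right t ht, map_add]
  -- lower bound for the new path
  have lb' : ∀ s ∈ Icc (0:ℝ) 1, (Q : ℝ) + 1 ≤ β (eOp β βv σ s) := by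
    intro s hs
    rcases le_or_gt s (yTime β σ) with h1 | h1
    · rw [e_left s h1]; exact hleft s ⟨hs.1, h1⟩
    · rcases le_or_gt s (qTime β σ) with h2 | h2
      · rw [v_mid β s h1 h2, hβ]
        have := hmid s ⟨h1, h2⟩
        linarith
      · rw [v_right β s h2.le, hβ]
        have := hge s hs
        linarith
  have val_ey : β (eOp β βv σ (yTime β σ)) = (Q : ℝ) + 1 := by
    rw [e_left _ le_rfl]; exact val_y
  have hQval' : Qval β (eOp β βv σ) = (Q : ℝ) + 1 := by
    apply IsLeast.csInf_eq
    constructor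
    · exact ⟨yTime β σ, ⟨hy0, hy1⟩, val_ey⟩
    · rintro r ⟨s, hs, rfl⟩
      exact lb' s hs
  have hminset : ∀ s ∈ Icc (0:ℝ) 1, β (eOp β βv σ s) = (Q : ℝ) + 1 → s ≤ yTime β σ := by
    intro s hs hv
    by_contra hgt
    push_neg at hgt
    rcases le_or_gt s (qTime β σ) with h2 | h2
    · rw [v_mid β s hgt h2, hβ] at hv
      have := hmid s ⟨hgt, h2⟩
      linarith
    · rw [v_right β s h2.le, hβ] at hv
      have := hge s hs
      linarith
  have q'_le_y : qTime β (eOp β βv σ) ≤ yTime β σ := by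
    unfold qTime
    simp only [hQval']
    exact csInf_le ⟨0, fun x hx => hx.1.1⟩ ⟨⟨hy0, hy1⟩, val_ey⟩
  -- continuity of the new path
  have cont' : ∀ γ : V →ₗ[ℝ] ℝ, ContinuousOn (fun s => γ (eOp β βv σ s)) (Icc (0:ℝ) 1) := by
    intro γ
    have hsub2 : Icc (yTime β σ) (qTime β σ) ⊆ Icc (0:ℝ) 1 := Icc_subset_Icc hy0 hqIcc.2
    have hsub3 : Icc (qTime β σ) 1 ⊆ Icc (0:ℝ) 1 := Icc_subset_Icc hqIcc.1 le_rfl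
    have hc1 : ContinuousOn (fun s => γ (eOp β βv σ s)) (Icc 0 (yTime β σ)) :=
      ((h.cont γ).mono (Icc_subset_Icc le_rfl hy1)).congr (fun s hs => by
        show γ (eOp β βv σ s) = γ (σ s); rw [e_left s hs.2])
    have hc2 : ContinuousOn (fun s => γ (eOp β βv σ s))
        (Icc (yTime β σ) (qTime β σ)) := by
      refine ContinuousOn.congr
        (f := fun s => γ (σ s) - (β (σ s) - ((Q : ℝ) + 1)) * γ βv) ?_ ?_
      · exact ((h.cont γ).mono hsub2).sub
          ((((h.cont β).mono hsub2).sub continuousOn_const).mul continuousOn_const)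
      · intro s hs
        show γ (eOp β βv σ s) = γ (σ s) - (β (σ s) - ((Q : ℝ) + 1)) * γ βv
        rcases eq_or_lt_of_le hs.1 with heq | hlt
        · rw [← heq, e_left _ le_rfl, val_y]; ring
        · exact v_mid γ s hlt hs.2
    have hc3 : ContinuousOn (fun s => γ (eOp β βv σ s)) (Icc (qTime β σ) 1) := by
      refine ContinuousOn.congr (f := fun s => γ (σ s) + γ βv) ?_ ?_
      · exact ((h.cont γ).mono hsub3).add continuousOn_const
      · intro s hs
        show γ (eOp β βv σ s) = γ (σ s) + γ βv
        exact v_right γ s hs.1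
    exact continuousOn_glue hqIcc.1 hqIcc.2
      (continuousOn_glue hy0 hyq.le hc1 hc2) hc3
  have zero' : eOp β βv σ 0 = 0 := by rw [e_left 0 hy0, h.zero]
  have intmin' : ∀ t, IsLocalMinPt (fun s => β (eOp β βv σ s)) t →
      t < qTime β (eOp β βv σ) → ∃ m : ℤ, β (eOp β βv σ t) = (m : ℝ) := by
    intro t hlm hlt
    have hty : t < yTime β σ := lt_of_lt_of_le hlt q'_le_y
    have hlm' : IsLocalMinPt (fun s => β (σ s)) t := by
      refine lm_congr hlm ?_
      filter_upwards [Iio_mem_nhds hty] with s hs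
      exact (e_left s (le_of_lt hs) ▸ rfl : β (σ s) = β (eOp β βv σ s))
    obtain ⟨m, hm⟩ := h.intmin t hlm' (hty.trans hyq)
    exact ⟨m, by rw [e_left t hty.le]; exact hm⟩
  have nice' : Nice β (eOp β βv σ) (Q + 1) :=
    ⟨cont', zero', by rw [hQval']; push_cast; ring, intmin'⟩
  -- pTime and xTime of the new path
  have hpt : pTime β (eOp β βv σ) = yTime β σ := by
    have hmem : yTime β σ ∈
        {t | t ∈ Icc (0:ℝ) 1 ∧ β (eOp β βv σ t) = Qval β (eOp β βv σ)} :=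
      ⟨⟨hy0, hy1⟩, by rw [hQval']; exact val_ey⟩
    have hub : ∀ s ∈ {t | t ∈ Icc (0:ℝ) 1 ∧ β (eOp β βv σ t) = Qval β (eOp β βv σ)},
        s ≤ yTime β σ := by
      intro s hs
      exact hminset s hs.1 (by rw [← hQval']; exact hs.2)
    exact le_antisymm (csSup_le ⟨yTime β σ, hmem⟩ hub) (le_csSup ⟨yTime β σ, hub⟩ hmem)
  have hxt : xTime β (eOp β βv σ) = qTime β σ := by
    unfold xTime
    simp only [hpt, hQval']
    have hmem : qTime β σ ∈ {t | t ∈ Icc (0:ℝ) 1 ∧ yTime β σ < t ∧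
        β (eOp β βv σ t) = (Q : ℝ) + 1 + 1} :=
      ⟨hqIcc, hyq, by rw [v_right β _ le_rfl, hβ, val_q]; ring⟩
    have hlb : ∀ s ∈ {t | t ∈ Icc (0:ℝ) 1 ∧ yTime β σ < t ∧
        β (eOp β βv σ t) = (Q : ℝ) + 1 + 1}, qTime β σ ≤ s := by
      rintro s ⟨hs1, hs2, hs3⟩
      by_contra hq'
      push_neg at hq'
      rw [v_mid β s hs2 hq'.le, hβ] at hs3
      have hgt := h.gt_on s hs1.1 hq'
      linarith
    exact le_antisymm (csInf_le ⟨0, fun x hx => hx.1.1⟩ hmem) (le_csInf ⟨_, hmem⟩ hlb)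
  have finv : fOp β βv (eOp β βv σ) = σ := by
    funext t
    simp only [fOp, hpt, hxt]
    rcases le_or_gt t (yTime β σ) with h1 | h1
    · rw [if_pos h1, e_left t h1]
    · rw [if_neg (not_le.mpr h1)]
      rcases le_or_gt t (qTime β σ) with h2 | h2
      · rw [if_pos h2, e_left _ le_rfl, e_mid t h1 h2]
        have harr : σ (yTime β σ) + sRefl β βv (σ t - σ (yTime β σ)) - σ (yTime β σ)
            = sRefl β βv (σ t - σ (yTime β σ)) := by abel
        rw [harr, sRefl_sRefl hβ]
        abel
      · rw [if_neg (not_le.mpr h2), e_gt t h2]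
        abel
  exact ⟨nice', hy0, hyq, hqpos, hqIcc.2, val_q, val_y, hleft, hmid, hge,
    e_left, v_mid, v_right, e_right, q'_le_y, finv⟩

lemma chain {β : V →ₗ[ℝ] ℝ} {βv : V} {σ : ℝ → V} {Q : ℤ} (hβ : β βv = 2) (h : Nice β σ Q) :
    ∀ n : ℕ, Q + n ≤ 0 →
      Nice β ((eOp β βv)^[n] σ) (Q + n) ∧ (fOp β βv)^[n] ((eOp β βv)^[n] σ) = σ := by
  intro n
  induction n with
  | zero =>
    intro _
    constructor
    · simpa using h
    · simp
  | succ n ih =>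
    intro hn
    have hcast : ((n+1 : ℕ) : ℤ) = (n : ℤ) + 1 := by push_cast; ring
    have hn' : Q + n ≤ 0 := by omega
    obtain ⟨hnice, hinv⟩ := ih hn'
    have hQn : Q + n ≤ -1 := by rw [hcast] at hn; omega
    have SF := step hβ hnice hQn
    constructor
    · have hQeq : Q + ((n+1 : ℕ) : ℤ) = Q + n + 1 := by omega
      rw [hQeq, Function.iterate_succ_apply']
      exact SF.nice'
    · rw [Function.iterate_succ_apply' (eOp β βv) n σ,
        Function.iterate_succ_apply (fOp β βv) n, SF.finv, hinv]

/-- If `ε_0(π) = N > 0` and `π` attains `min α_0∘π = -N` during an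
`α_1`-stable section at `N`, then `min α_1∘(e_0^N π) ≤ -N`; consequently `e_1^N e_0^N (π)`
is defined and `π = f_0^N f_1^N e_1^N e_0^N (π)`.  (The statement with the indices `0` and
`1` exchanged is the instance obtained by swapping the arguments.) -/
theorem in_image_of_fzero_fone {V : Type*} [AddCommGroup V] [Module ℝ V]
    (a0 a1 : V →ₗ[ℝ] ℝ) (v0 v1 : V) (hd : IsAffineSL2 a0 a1 v0 v1)
    (π : ℝ → V) (hπ : IsPath π) (hint : IsIntegralPathSL2 a0 a1 π)
    (N : ℕ) (hN : 0 < N) (hQ0 : Qval a0 π = -(N : ℝ))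
    (hat : ∃ a b t₀ : ℝ, IsStableSectionAt (fun r => a1 (π r)) (N : ℝ) a b ∧
      t₀ ∈ Set.Icc a b ∧ a0 (π t₀) = -(N : ℝ)) :
    Qval a1 ((eOp a0 v0)^[N] π) ≤ -(N : ℝ) ∧
    (∀ j, j < N → Qval a1 ((eOp a1 v1)^[j] ((eOp a0 v0)^[N] π)) ≤ -1) ∧
    ∀ t ∈ Set.Icc (0 : ℝ) 1,
      π t = (fOp a0 v0)^[N] ((fOp a1 v1)^[N] ((eOp a1 v1)^[N] ((eOp a0 v0)^[N] π))) t := by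
  obtain ⟨h00, h11, h01, h10⟩ := hd
  obtain ⟨hπ0, hπpw⟩ := hπ
  -- root integrality in convenient form
  have hrootR : ∀ k : ℕ, ∀ t,
      IsLocalMinPt (fun s => a1 (π s) + (k:ℝ) * (a0 (π s) + a1 (π s))) t →
      ∃ m : ℤ, a1 (π t) + (k:ℝ) * (a0 (π t) + a1 (π t)) = m := by
    intro k
    have h0 := (hint k).2.2.2
    have hfun : (fun t => (a1 + (k : ℝ) • (a0 + a1)) (π t))
        = fun s => a1 (π s) + (k:ℝ) * (a0 (π s) + a1 (π s)) := by
      funext s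
      simp only [LinearMap.add_apply, LinearMap.smul_apply, smul_eq_mul]
      try ring
    rw [hfun] at h0
    exact h0
  have hrootW1 : ∀ k : ℕ, ∀ t,
      IsLocalMinPt (fun s => a0 (π s) + ((k:ℝ)+1) * (a0 (π s) + a1 (π s))) t →
      ∃ m : ℤ, a0 (π t) + ((k:ℝ)+1) * (a0 (π t) + a1 (π t)) = m := by
    intro k
    have h0 := (hint (k+1)).1.2.2
    have hfun : (fun t => (a0 + ((k+1 : ℕ) : ℝ) • (a0 + a1)) (π t))
        = fun s => a0 (π s) + ((k:ℝ)+1) * (a0 (π s) + a1 (π s)) := by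
      funext s
      simp only [LinearMap.add_apply, LinearMap.smul_apply, smul_eq_mul]
      push_cast
      ring
    rw [hfun] at h0
    exact h0
  have hend1 : ∃ m : ℤ, a1 (π 1) = m := by
    have h0 := (hint 0).2.2.1
    simpa using h0
  have hroot0 : ∀ t, IsLocalMinPt (fun s => a0 (π s)) t → ∃ m : ℤ, a0 (π t) = m := by
    have h0 := (hint 0).1.2.2
    have hfun : (fun t => (a0 + ((0:ℕ) : ℝ) • (a0 + a1)) (π t)) = fun s => a0 (π s) := by
      funext s; simp
    rw [hfun] at h0
    exact h0
  -- base Nice for a0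
  have hNice0 : Nice a0 π (-(N:ℤ)) := by
    refine ⟨fun γ => contOn_of_pwlinear γ hπpw, hπ0, ?_, fun t hlm _ => hroot0 t hlm⟩
    rw [hQ0]; push_cast; ring
  -- main induction along the `e₀`-chain
  have main : ∀ j : ℕ, j ≤ N →
      Nice a0 ((eOp a0 v0)^[j] π) (-(N:ℤ) + j) ∧
      (∃ c : ℝ, qTime a0 ((eOp a0 v0)^[j] π) ≤ c ∧ c ≤ 1 ∧
        (∀ s, 0 ≤ s → s ≤ c → (eOp a0 v0)^[j] π s = π s) ∧
        (c = 1 ∨ ∃ d : ℝ, c < d ∧ d ≤ 1 ∧ ∀ s, c < s → s ≤ d →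
          a0 ((eOp a0 v0)^[j] π s) = 2 * ((-(N:ℤ) + j : ℤ) : ℝ) - a0 (π s) ∧
          a1 ((eOp a0 v0)^[j] π s) = a1 (π s) + 2 * a0 (π s) - 2 * ((-(N:ℤ) + j : ℤ) : ℝ))) ∧
      qTime a0 ((eOp a0 v0)^[j] π) ≤ qTime a0 π ∧
      (∀ t, qTime a0 π ≤ t → (eOp a0 v0)^[j] π t = π t + (j : ℝ) • v0) ∧
      (∀ k : ℕ, ∀ t, IsLocalMinPt
          (fun s => a1 ((eOp a0 v0)^[j] π s) + (k:ℝ) * (a0 (π s) + a1 (π s))) t →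
        ∃ m : ℤ, a1 ((eOp a0 v0)^[j] π t) + (k:ℝ) * (a0 (π t) + a1 (π t)) = m) := by
    intro j
    induction j with
    | zero =>
      intro _
      simp only [Function.iterate_zero, id_eq, Nat.cast_zero, add_zero]
      refine ⟨hNice0, ⟨1, hNice0.qfacts.1.2, le_rfl, fun s _ _ => trivial, Or.inl rfl⟩,
        le_rfl, fun t _ => by simp, hrootR⟩
    | succ j ihj =>
      intro hj1
      have hj : j ≤ N := Nat.le_of_succ_le hj1
      obtain ⟨hnice, ⟨c, hqc, hc1, hagree, hRS⟩, hqle, hshift, hA⟩ := ihj hj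
      have hQj : -(N:ℤ) + j ≤ -1 := by omega
      set σj := (eOp a0 v0)^[j] π with hσj
      have SF := step h00 hnice hQj
      have hiter := Function.iterate_succ_apply' (eOp a0 v0) j π
      rw [← hσj] at hiter
      have hQcast : (-(N:ℤ) + ((j+1 : ℕ) : ℤ)) = (-(N:ℤ) + j) + 1 := by omega
      simp only [hiter, hQcast]
      have hy1 : yTime a0 σj ≤ 1 := SF.y_lt_q.le.trans SF.q_le_one
      refine ⟨SF.nice', ⟨yTime a0 σj, SF.q'_le_y, hy1, ?_, Or.inr ⟨qTime a0 σj,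
        SF.y_lt_q, SF.q_le_one, ?_⟩⟩, SF.q'_le_y.trans (SF.y_lt_q.le.trans hqle), ?_, ?_⟩
      · -- agreement on [0, y]
        intro s h0 hsy
        rw [SF.e_left s hsy]
        exact hagree s h0 (hsy.trans (SF.y_lt_q.le.trans hqc))
      · -- reflected description on (y, q]
        intro s hys hsq
        have hs0 : (0:ℝ) ≤ s := SF.y_nonneg.trans hys.le
        have hagr : σj s = π s := hagree s hs0 (hsq.trans hqc)
        constructor
        · rw [SF.v_mid a0 s hys hsq, h00, hagr]
          push_cast; ring
        · rw [SF.v_mid a1 s hys hsq, h10, hagr]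
          push_cast; ring
      · -- shift on [q0, 1]
        intro t ht
        rw [SF.e_right t (hqle.trans ht), hshift t ht]
        have hsm : ((j+1 : ℕ) : ℝ) = (j : ℝ) + 1 := by push_cast; ring
        rw [hsm, add_smul, one_smul]
        abel
      · -- integrality of local minima of the a1-roots along the new path
        intro k t hlm
        have ht : t ∈ Ioo (0:ℝ) 1 := hlm.1
        rcases lt_or_ge t (yTime a0 σj) with h1 | h1
        · -- before y : transfer to stage j
          have hlm' : IsLocalMinPt
              (fun s => a1 (σj s) + (k:ℝ) * (a0 (π s) + a1 (π s))) t := by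
            refine lm_congr hlm ?_
            filter_upwards [Iio_mem_nhds h1] with s hs
            rw [SF.e_left s (le_of_lt hs)]
          obtain ⟨m, hm⟩ := hA k t hlm'
          refine ⟨m, ?_⟩
          rw [SF.e_left t h1.le]
          exact hm
        · rcases le_or_gt t (qTime a0 σj) with h2 | h2
          · -- the reflected zone [y, q] : compare with the root a0 + (k+1)δ
            obtain ⟨e, hte, hright⟩ :
                ∃ e, t < e ∧ ∀ s, qTime a0 σj < s → s < e →
                  2 * ((-(N:ℤ) + j : ℤ) : ℝ) + 2 ≤
                    (a0 (π s) + ((k:ℝ)+1) * (a0 (π s) + a1 (π s)))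
                      - (a1 (eOp a0 v0 σj s) + (k:ℝ) * (a0 (π s) + a1 (π s))) := by
              rcases lt_or_eq_of_le hqc with hlt | heq
              · refine ⟨c, lt_of_le_of_lt h2 hlt, ?_⟩
                intro s hqs hsc
                have hs0 : (0:ℝ) ≤ s := SF.q_pos.le.trans hqs.le
                have hagr : σj s = π s := hagree s hs0 hsc.le
                have hvr := SF.v_right a1 s hqs.le
                rw [h10] at hvr
                have hge := SF.ge_all s ⟨hs0, hsc.le.trans hc1⟩
                rw [hagr] at hvr hge
                rw [hvr]
                push_cast at hge ⊢
                linarith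
              · rcases hRS with hc1' | ⟨d, hcd, hd1, hdprop⟩
                · refine ⟨1, ht.2, ?_⟩
                  intro s hqs hs1
                  exfalso
                  rw [heq, hc1'] at hqs
                  linarith
                · refine ⟨d, lt_of_le_of_lt h2 (heq ▸ hcd), ?_⟩
                  intro s hqs hsd
                  have hcs : c < s := heq ▸ hqs
                  obtain ⟨hd0, hd1'⟩ := hdprop s hcs hsd.le
                  have hvr := SF.v_right a1 s hqs.le
                  rw [h10] at hvr
                  rw [hvr, hd1']
                  push_cast
                  linarith
            have hkey : ∀ s, 0 < s → s < e →
                2 * ((-(N:ℤ) + j : ℤ) : ℝ) + 2 ≤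
                  (a0 (π s) + ((k:ℝ)+1) * (a0 (π s) + a1 (π s)))
                    - (a1 (eOp a0 v0 σj s) + (k:ℝ) * (a0 (π s) + a1 (π s))) := by
              intro s hs0 hse
              rcases le_or_gt s (yTime a0 σj) with hsy | hsy
              · have hagr : σj s = π s :=
                  hagree s hs0.le (hsy.trans (SF.y_lt_q.le.trans hqc))
                have heq' : a1 (eOp a0 v0 σj s) = a1 (π s) := by
                  rw [SF.e_left s hsy, hagr]
                have hll := SF.lower_left s ⟨hs0.le, hsy⟩
                rw [hagr] at hll
                rw [heq']
                push_cast at hll ⊢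
                linarith
              · rcases le_or_gt s (qTime a0 σj) with hsq | hsq
                · have hagr : σj s = π s := hagree s hs0.le (hsq.trans hqc)
                  have hv := SF.v_mid a1 s hsy hsq
                  rw [h10, hagr] at hv
                  rw [hv]
                  push_cast
                  linarith
                · exact hright s hsq hse
            have hvalt : (a0 (π t) + ((k:ℝ)+1) * (a0 (π t) + a1 (π t)))
                - (a1 (eOp a0 v0 σj t) + (k:ℝ) * (a0 (π t) + a1 (π t)))
                = 2 * ((-(N:ℤ) + j : ℤ) : ℝ) + 2 := by
              rcases eq_or_lt_of_le h1 with heqy | hlty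
              · have hagr : σj t = π t := hagree t ht.1.le (h2.trans hqc)
                have heq' : a1 (eOp a0 v0 σj t) = a1 (π t) := by
                  rw [SF.e_left t heqy.ge, hagr]
                have hvy := SF.val_y
                rw [heqy, hagr] at hvy
                rw [heq']
                push_cast at hvy ⊢
                linarith
              · have hv := SF.v_mid a1 t hlty h2
                rw [h10] at hv
                have hagr : σj t = π t := hagree t ht.1.le (h2.trans hqc)
                rw [hagr] at hv
                rw [hv]
                push_cast
                ring
            have hlmR : IsLocalMinPt
                (fun s => a0 (π s) + ((k:ℝ)+1) * (a0 (π s) + a1 (π s))) t := by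
              refine lm_of_le hlm ?_
              filter_upwards [Ioo_mem_nhds ht.1 hte] with s hs
              have := hkey s hs.1 hs.2
              linarith [hvalt]
            obtain ⟨m, hm⟩ := hrootW1 k t hlmR
            refine ⟨m - 2 * (-(N:ℤ) + j) - 2, ?_⟩
            push_cast at hvalt hm ⊢
            linarith
          · -- after q : transfer to stage j (shift by -2)
            have hvt := SF.v_right a1 t h2.le
            rw [h10] at hvt
            have hlmj : IsLocalMinPt
                (fun s => a1 (σj s) + (k:ℝ) * (a0 (π s) + a1 (π s))) t := by
              refine lm_of_le hlm ?_
              filter_upwards [Ioi_mem_nhds h2] with s hs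
              have hvs := SF.v_right a1 s (le_of_lt hs)
              rw [h10] at hvs
              rw [hvs, hvt]
              linarith
            obtain ⟨m, hm⟩ := hA k t hlmj
            refine ⟨m - 2, ?_⟩
            rw [hvt]
            push_cast
            linarith
  -- instantiate at j = N
  obtain ⟨hniceN, _, hqleN, hshiftN, hAN⟩ := main N le_rfl
  have hq0Icc := hNice0.qfacts.1
  -- the minimum of a1 along the new path is integral
  obtain ⟨t0, ht0, hm0, hinf0⟩ := exists_minOn (hniceN.cont a1)
  have hQvalm : Qval a1 ((eOp a0 v0)^[N] π) = a1 ((eOp a0 v0)^[N] π t0) := hinf0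
  have hZ : ∃ m : ℤ, a1 ((eOp a0 v0)^[N] π t0) = m := by
    rcases eq_or_lt_of_le ht0.1 with he0 | h0
    · refine ⟨0, ?_⟩
      rw [← he0, hniceN.zero, map_zero]
      norm_num
    · rcases eq_or_lt_of_le ht0.2 with he1 | h1
      · obtain ⟨m, hm⟩ := hend1
        refine ⟨m - 2 * N, ?_⟩
        rw [he1, hshiftN 1 hq0Icc.2]
        simp only [map_add, map_smul, smul_eq_mul, h10, hm]
        push_cast
        ring
      · have hlm : IsLocalMinPt (fun s => a1 ((eOp a0 v0)^[N] π s)) t0 := by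
          refine ⟨⟨h0, h1⟩, ?_⟩
          filter_upwards [Ioo_mem_nhds h0 h1] with s hs
          exact hm0 s ⟨hs.1.le, hs.2.le⟩
        have hlm' : IsLocalMinPt
            (fun s => a1 ((eOp a0 v0)^[N] π s) + ((0:ℕ):ℝ) * (a0 (π s) + a1 (π s))) t0 :=
          lm_congr hlm (Filter.Eventually.of_forall (fun s => by push_cast; ring))
        obtain ⟨m, hm⟩ := hAN 0 t0 hlm'
        refine ⟨m, ?_⟩
        push_cast at hm
        linarith
  obtain ⟨Q1, hQ1v⟩ := hZ
  -- the stable section gives the bound Q1 ≤ -N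
  obtain ⟨a, b, t₀, hstab, ht₀mem, ht₀val⟩ := hat
  obtain ⟨ha0, hab, hb1, hfa, hfb, hmidp⟩ := hstab.1
  have hb0 : (0:ℝ) ≤ b := ha0.trans hab.le
  have ht₀Icc : t₀ ∈ Icc (0:ℝ) 1 := ⟨ha0.trans ht₀mem.1, ht₀mem.2.trans hb1⟩
  have hq0b : qTime a0 π ≤ b := by
    have hle := hNice0.qfacts.2.2 t₀ ht₀Icc (by rw [ht₀val]; push_cast; ring)
    exact hle.trans ht₀mem.2
  have hvalb : a1 ((eOp a0 v0)^[N] π b) = (N:ℝ) - 2*N := by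
    rw [hshiftN b hq0b]
    simp only [map_add, map_smul, smul_eq_mul, h10, hfb]
    ring
  have hQ1N : (Q1:ℝ) ≤ -(N:ℝ) := by
    have hbdd : BddBelow ((fun t => a1 ((eOp a0 v0)^[N] π t)) '' Icc (0:ℝ) 1) :=
      ⟨a1 ((eOp a0 v0)^[N] π t0), by rintro r ⟨s, hs, rfl⟩; exact hm0 s hs⟩
    have hle : Qval a1 ((eOp a0 v0)^[N] π) ≤ a1 ((eOp a0 v0)^[N] π b) :=
      csInf_le hbdd ⟨b, ⟨hb0, hb1⟩, rfl⟩
    rw [hQvalm, hQ1v, hvalb] at hle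
    linarith
  have hQ1Nz : Q1 ≤ -(N:ℤ) := by exact_mod_cast hQ1N
  have hQval1 : Qval a1 ((eOp a0 v0)^[N] π) = (Q1 : ℝ) := by rw [hQvalm, hQ1v]
  have hniceA1 : Nice a1 ((eOp a0 v0)^[N] π) Q1 := by
    refine ⟨hniceN.cont, hniceN.zero, hQval1, ?_⟩
    intro t hlm _
    have hlm' : IsLocalMinPt
        (fun s => a1 ((eOp a0 v0)^[N] π s) + ((0:ℕ):ℝ) * (a0 (π s) + a1 (π s))) t :=
      lm_congr hlm (Filter.Eventually.of_forall (fun s => by push_cast; ring))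
    obtain ⟨m, hm⟩ := hAN 0 t hlm'
    refine ⟨m, ?_⟩
    push_cast at hm
    linarith
  have hchain1 : ∀ n : ℕ, n ≤ N →
      Nice a1 ((eOp a1 v1)^[n] ((eOp a0 v0)^[N] π)) (Q1 + n) ∧
      (fOp a1 v1)^[n] ((eOp a1 v1)^[n] ((eOp a0 v0)^[N] π)) = (eOp a0 v0)^[N] π := by
    intro n hn
    refine chain h11 hniceA1 n ?_
    have hnN : (n:ℤ) ≤ (N:ℤ) := by exact_mod_cast hn
    omega
  have hchain0 := chain h00 hNice0 N (by omega)
  refine ⟨?_, ?_, ?_⟩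
  · rw [hQval1]; exact hQ1N
  · intro j hj
    rw [(hchain1 j hj.le).1.qval]
    have hjN : (j:ℤ) < (N:ℤ) := by exact_mod_cast hj
    have hfin : Q1 + (j:ℤ) ≤ -1 := by omega
    exact_mod_cast hfin
  · intro t _
    rw [(hchain1 N le_rfl).2, hchain0.2]

end MVPaper
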